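/- Let α, β, c be real parameters. For every function f : ℝ → ℝ and every x ≠ 0, the anticommutator identity {Y,Z} f = ω₁ f holds at x, i.e. Y(Zf)(x) + Z(Yf)(x) = −8c f(x). -/

import Mathlib

noncomputable section

noncomputable def Yop (f : ℝ → ℝ) (x : ℝ) : ℝ := 2 * x * f x

noncomputable def Zop (c : ℝ) (f : ℝ → ℝ) (x : ℝ) : ℝ :=
  -(2 / x) * (c * f x + (x - 1) * (x + c) * f (-x))

theorem Yop_Zop (c : ℝ) (f : ℝ → ℝ) {x : ℝ} (hx : x ≠ 0) :
    Yop (Zop c f) x = -4 * (c * f x + (x - 1) * (x + c) * f (-x)) := by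
  simp only [Yop, Zop]
  field_simp
  ring

theorem Zop_Yop (c : ℝ) (f : ℝ → ℝ) {x : ℝ} (hx : x ≠ 0) :
    Zop c (Yop f) x = -4 * (c * f x - (x - 1) * (x + c) * f (-x)) := by
  simp only [Yop, Zop]
  field_simp
  ring

theorem anticomm_YZ_general (c : ℝ) (f : ℝ → ℝ) (x : ℝ) (hx : x ≠ 0) :
    Yop (Zop c f) x + Zop c (Yop f) x = -8 * c * f x := by
  rw [Yop_Zop c f hx, Zop_Yop c f hx]
  ring

/-- The anticommutation relation `{Y, Z} = ω₁` with `ω₁ = -8c`. -/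
theorem anticomm_YZ (α β c : ℝ) (f : ℝ → ℝ) (x : ℝ) (hx : x ≠ 0) :
    Yop (Zop c f) x + Zop c (Yop f) x = -8 * c * f x :=
  anticomm_YZ_general c f x hx
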